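/- arXiv:2101.10689 — 4 statements merged into one kernel-verified Lean document; each statement's English description precedes it below -/
import Mathlib

section
/- Let X ∈ ℝ^{n×n} and p ∈ ℝⁿ with (X, p) controllable. Let q ∈ ℝⁿ and suppose that X + pqᵀ and X do not share any eigenvalue, i.e. the characteristic polynomials of X and of X + pqᵀ are coprime in ℝ[x]. Then the pair (Xᵀ + qpᵀ, q) is controllable (equivalently, (X + pqᵀ, qᵀ) is observable). -/
open Matrix

/-- A pair `(X, p)` is controllable if `p, Xp, …, X^{n−1}p` span the whole space. -/
def Controllable {n : ℕ} (X : Matrix (Fin n) (Fin n) ℝ) (p : Fin n → ℝ) : Prop :=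
  Submodule.span ℝ (Set.range fun i : Fin n => (X ^ (i : ℕ)) *ᵥ p) = ⊤

/-!
Write `A = X + pqᵀ`. If `w` is orthogonal to every `(Aᵀ)ᵏ q`, then `qᵀ Aᵏ w = 0` for all `k`, so
the rank-one term `pqᵀ` never acts along the orbit of `w`: `Aᵏ w = Xᵏ w`, and hence
`χ_X(A) w = χ_X(X) w = 0` by Cayley–Hamilton. Since `χ_X` is coprime to `χ_A`, which kills `A`,
the matrix `χ_X(A)` is invertible, so `w = 0`. Cayley–Hamilton also shows that the first `n`
powers of `Aᵀ` applied to `q` span as much as all of them do.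
-/

theorem Polynomial.isUnit_aeval_of_isCoprime {R A : Type*} [CommRing R] [Ring A] [Algebra R A]
    {f g : Polynomial R} {x : A} (hfg : IsCoprime f g) (hg : aeval x g = 0) :
    IsUnit (aeval x f) := by
  obtain ⟨a, b, hab⟩ := hfg
  have hinv : aeval x a * aeval x f = 1 := by
    simpa [hg] using congrArg (aeval x) hab
  refine isUnit_iff_exists.2 ⟨aeval x a, ?_, hinv⟩
  rw [← map_mul, mul_comm, map_mul, hinv]

theorem Submodule.span_range_eq_top_of_forall_dotProduct_eq_zero {ι n K : Type*} [Field K]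
    [Fintype n] [DecidableEq n] (v : ι → n → K) (h : ∀ w, (∀ i, w ⬝ᵥ v i = 0) → w = 0) :
    span K (Set.range v) = ⊤ := by
  by_contra hne
  obtain ⟨f, hf, hmap⟩ := exists_dual_map_eq_bot_of_lt_top (lt_top_iff_ne_top.2 hne) inferInstance
  obtain ⟨w, rfl⟩ := (dotProductEquiv K n).surjective f
  refine hf ?_
  rw [h w fun i => ?_, map_zero]
  simpa using (Submodule.eq_bot_iff _).1 hmap _ (mem_map_of_mem (subset_span ⟨i, rfl⟩))

namespace Matrix

variable {R : Type*} [CommRing R]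

section Krylov

variable {n : ℕ} (M : Matrix (Fin n) (Fin n) R) (v : Fin n → R)

theorem pow_mulVec_mem_span_range_pow_mulVec (k : ℕ) :
    M ^ k *ᵥ v ∈ Submodule.span R (Set.range fun i : Fin n => M ^ (i : ℕ) *ᵥ v) := by
  nontriviality R
  rcases eq_or_ne n 0 with rfl | hn
  · simp [Subsingleton.elim (M ^ k *ᵥ v) 0]
  have hdeg : (Polynomial.X ^ k %ₘ M.charpoly).natDegree < n := by
    have h := Polynomial.natDegree_modByMonic_lt (Polynomial.X ^ k) M.charpoly_monic
      (fun h1 => hn (by simpa [h1] using M.charpoly_natDegree_eq_dim.symm))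
    simpa [M.charpoly_natDegree_eq_dim] using h
  rw [pow_eq_aeval_mod_charpoly, Polynomial.aeval_eq_sum_range' hdeg, sum_mulVec,
    ← Fin.sum_univ_eq_sum_range]
  refine Submodule.sum_mem _ fun i _ => ?_
  rw [smul_mulVec]
  exact Submodule.smul_mem _ _ (Submodule.subset_span ⟨i, rfl⟩)

theorem span_range_fin_pow_mulVec :
    Submodule.span R (Set.range fun i : Fin n => M ^ (i : ℕ) *ᵥ v) =
      Submodule.span R (Set.range fun k : ℕ => M ^ k *ᵥ v) :=
  le_antisymm (Submodule.span_mono (Set.range_subset_iff.2 fun i => ⟨i, rfl⟩))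
    (Submodule.span_le.2 (Set.range_subset_iff.2 (pow_mulVec_mem_span_range_pow_mulVec M v)))

end Krylov

section RankOnePerturbation

variable {ι : Type*} [Fintype ι] [DecidableEq ι] (M : Matrix ι ι R) {p q w : ι → R}

theorem add_vecMulVec_pow_mulVec (h : ∀ k, q ⬝ᵥ ((M + vecMulVec p q) ^ k *ᵥ w) = 0) (k : ℕ) :
    (M + vecMulVec p q) ^ k *ᵥ w = M ^ k *ᵥ w := by
  induction k with
  | zero => rfl
  | succ k ih =>
    rw [pow_succ', ← mulVec_mulVec, add_mulVec, vecMulVec_mulVec, h k, MulOpposite.op_zero,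
      zero_smul, add_zero, ih, mulVec_mulVec, ← pow_succ']

theorem aeval_add_vecMulVec_mulVec (h : ∀ k, q ⬝ᵥ ((M + vecMulVec p q) ^ k *ᵥ w) = 0)
    (f : Polynomial R) :
    Polynomial.aeval (M + vecMulVec p q) f *ᵥ w = Polynomial.aeval M f *ᵥ w := by
  simp only [Polynomial.aeval_eq_sum_range, sum_mulVec, smul_mulVec, add_vecMulVec_pow_mulVec M h]

end RankOnePerturbation

end Matrix

theorem controllable_of_no_shared_eigenvalue_general {n : ℕ}
    (X : Matrix (Fin n) (Fin n) ℝ) (p q : Fin n → ℝ)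
    (hcop : IsCoprime X.charpoly (X + vecMulVec p q).charpoly) :
    Controllable (Xᵀ + vecMulVec q p) q := by
  set A := X + vecMulVec p q
  have hAT : Xᵀ + vecMulVec q p = Aᵀ := by simp [A, transpose_add]
  rw [hAT, Controllable, span_range_fin_pow_mulVec]
  refine Submodule.span_range_eq_top_of_forall_dotProduct_eq_zero _ fun w hw => ?_
  have hqw : ∀ k, q ⬝ᵥ (A ^ k *ᵥ w) = 0 := fun k => by
    rw [← hw k, ← transpose_pow, mulVec_transpose, dotProduct_mulVec]
    exact dotProduct_comm _ _
  have hunit := Polynomial.isUnit_aeval_of_isCoprime hcop A.aeval_self_charpoly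
  apply mulVec_injective_of_isUnit hunit
  rw [aeval_add_vecMulVec_mulVec X hqw, aeval_self_charpoly, zero_mulVec, mulVec_zero]

/-- If `(X, p)` is controllable and `X + pqᵀ` shares no eigenvalue with `X`
(i.e. their characteristic polynomials are coprime), then `(Xᵀ + qpᵀ, q)` is
controllable. -/
theorem controllable_of_no_shared_eigenvalue {n : ℕ}
    (X : Matrix (Fin n) (Fin n) ℝ) (p q : Fin n → ℝ)
    (hctrb : Controllable X p)
    (hcop : IsCoprime X.charpoly (X + vecMulVec p q).charpoly) :
    Controllable (Xᵀ + vecMulVec q p) q :=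
  controllable_of_no_shared_eigenvalue_general X p q hcop
end

section
/- Let X ∈ ℝ^{n×n} and p ∈ ℝⁿ with (X, p) controllable, and let φ(s) = det(sI − X) be the characteristic polynomial of X. Let Y ∈ ℝ^{m×m} and q ∈ ℝᵐ satisfy φ(Y)q = 0 (φ evaluated at the matrix Y, applied to q). Then there exists a matrix T ∈ ℝ^{m×n} such that TX = YT and Tp = q. -/
open Matrix

/-!
Controllability makes `f ↦ f(X) p` a surjection `ℝ[X] → ℝⁿ`. Its kernel lies in that of
`f ↦ f(Y) q`: reducing `f` modulo `φ` changes neither value (Cayley–Hamilton, resp. `φ(Y) q = 0`),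
and a remainder of degree `< n` that kills `p` vanishes since `p, Xp, …, X^{n-1}p` are independent.
Hence `f(X) p ↦ f(Y) q` is a well-defined linear map `T`; taking `f ↦ s f` and `f = 1` gives
`T X = Y T` and `T p = q`.
-/

open Polynomial

theorem LinearMap.exists_comp_eq_of_surjective_of_ker_le {R M N P : Type*} [Ring R]
    [AddCommGroup M] [AddCommGroup N] [AddCommGroup P] [Module R M] [Module R N] [Module R P]
    {e : M →ₗ[R] N} (he : Function.Surjective e) {f : M →ₗ[R] P} (h : ker e ≤ ker f) :
    ∃ g : N →ₗ[R] P, g ∘ₗ e = f :=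
  ⟨(ker e).liftQ f h ∘ₗ (e.quotKerEquivOfSurjective he).symm.toLinearMap, by ext; simp⟩

namespace Matrix

variable {ι R : Type*} [Fintype ι] [DecidableEq ι] [CommRing R]

noncomputable def aevalMulVec (A : Matrix ι ι R) (v : ι → R) : R[X] →ₗ[R] ι → R where
  toFun f := aeval A f *ᵥ v
  map_add' f g := by rw [map_add, add_mulVec]
  map_smul' c f := by rw [map_smul, smul_mulVec, RingHom.id_apply]

@[simp]
theorem aevalMulVec_apply (A : Matrix ι ι R) (v : ι → R) (f : R[X]) :
    aevalMulVec A v f = aeval A f *ᵥ v := rfl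

theorem aevalMulVec_X_mul (A : Matrix ι ι R) (v : ι → R) (f : R[X]) :
    aevalMulVec A v (X * f) = A *ᵥ aevalMulVec A v f := by
  rw [aevalMulVec_apply, aevalMulVec_apply, map_mul, aeval_X, mulVec_mulVec]

theorem aeval_modByMonic_mulVec {A : Matrix ι ι R} {v : ι → R} {φ : R[X]}
    (hφ : aeval A φ *ᵥ v = 0) (f : R[X]) : aeval A (f %ₘ φ) *ᵥ v = aeval A f *ᵥ v := by
  conv_rhs => rw [← modByMonic_add_div f φ]
  rw [mul_comm φ, map_add, map_mul, add_mulVec, ← mulVec_mulVec, hφ, mulVec_zero, add_zero]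

theorem aeval_mulVec_eq_sum_fin (A : Matrix ι ι R) (v : ι → R) {n : ℕ} {f : R[X]}
    (hf : f.degree < n) : aeval A f *ᵥ v = ∑ i : Fin n, f.coeff i • (A ^ (i : ℕ) *ᵥ v) := by
  rw [sum_fin (fun i a => a • (A ^ i *ᵥ v)) (fun i => zero_smul _ _) hf, aeval_def, eval₂_eq_sum,
    Polynomial.sum, Polynomial.sum, sum_mulVec]
  refine Finset.sum_congr rfl fun i _ => ?_
  rw [← Algebra.smul_def, smul_mulVec]

end Matrix

namespace Controllable

variable {n : ℕ} {X : Matrix (Fin n) (Fin n) ℝ} {p : Fin n → ℝ}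

theorem surjective_aevalMulVec (h : Controllable X p) : Function.Surjective (aevalMulVec X p) := by
  rw [← LinearMap.range_eq_top, eq_top_iff, ← h, Submodule.span_le]
  rintro _ ⟨i, rfl⟩
  exact ⟨Polynomial.X ^ (i : ℕ), by simp⟩

theorem eq_zero_of_degree_lt {r : ℝ[X]} (h : Controllable X p) (hr : r.degree < n)
    (hrp : aeval X r *ᵥ p = 0) : r = 0 := by
  have hli : LinearIndependent ℝ fun i : Fin n => X ^ (i : ℕ) *ᵥ p :=
    linearIndependent_of_top_le_span_of_card_eq_finrank h.ge (by simp)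
  rw [aeval_mulVec_eq_sum_fin X p hr] at hrp
  have hcoeff := Fintype.linearIndependent_iff.mp hli _ hrp
  ext i
  by_cases hi : i < n
  · exact hcoeff ⟨i, hi⟩
  · exact coeff_eq_zero_of_degree_lt (hr.trans_le (by exact_mod_cast not_lt.mp hi))

theorem ker_aevalMulVec_le {m : ℕ} {Y : Matrix (Fin m) (Fin m) ℝ} {q : Fin m → ℝ}
    (h : Controllable X p) (hq : aeval Y X.charpoly *ᵥ q = 0) :
    LinearMap.ker (aevalMulVec X p) ≤ LinearMap.ker (aevalMulVec Y q) := by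
  intro f hf
  rw [LinearMap.mem_ker, aevalMulVec_apply] at hf ⊢
  have hX : aeval X X.charpoly *ᵥ p = 0 := by rw [aeval_self_charpoly, zero_mulVec]
  have hdeg : (f %ₘ X.charpoly).degree < n := by
    simpa using degree_modByMonic_lt f X.charpoly_monic
  have hr := h.eq_zero_of_degree_lt hdeg (by rwa [aeval_modByMonic_mulVec hX])
  rw [← aeval_modByMonic_mulVec hq, hr, map_zero, zero_mulVec]

end Controllable

/-- If `(X, p)` is controllable with characteristic polynomial `φ`, and `φ(Y)q = 0`,
then there exists `T` with `TX = YT` and `Tp = q`. -/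
theorem exists_intertwiner {n m : ℕ}
    (X : Matrix (Fin n) (Fin n) ℝ) (p : Fin n → ℝ) (hctrb : Controllable X p)
    (Y : Matrix (Fin m) (Fin m) ℝ) (q : Fin m → ℝ)
    (hq : (Polynomial.aeval Y X.charpoly) *ᵥ q = 0) :
    ∃ T : Matrix (Fin m) (Fin n) ℝ, T * X = Y * T ∧ T *ᵥ p = q := by
  have hsurj := hctrb.surjective_aevalMulVec
  obtain ⟨g, hg⟩ := LinearMap.exists_comp_eq_of_surjective_of_ker_le hsurj
    (hctrb.ker_aevalMulVec_le hq)
  have hgf (f : ℝ[X]) : g (aevalMulVec X p f) = aevalMulVec Y q f := LinearMap.congr_fun hg f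
  refine ⟨LinearMap.toMatrix' g, ?_, ?_⟩
  · apply toLin'.injective
    rw [toLin'_mul, toLin'_mul, toLin'_toMatrix', ← LinearMap.cancel_right hsurj]
    refine LinearMap.ext fun f => ?_
    simp only [LinearMap.comp_apply, toLin'_apply]
    rw [← aevalMulVec_X_mul, hgf, hgf, aevalMulVec_X_mul]
  · simpa [LinearMap.toMatrix'_mulVec] using hgf 1
end

section
/- Let S ∈ ℝ^{n×n} and β ∈ ℝⁿ with (Sᵀ, β) controllable, and set Λ = S − 𝟙_n βᵀ, where 𝟙_n is the all-ones vector. Let A^u ∈ ℝ^{nᵘ×nᵘ} be a matrix whose characteristic polynomial divides the characteristic polynomial of S, and let C^u ∈ ℝ^{1×nᵘ} be a row vector. Then there exists a matrix G ∈ ℝ^{n×nᵘ} such that G A^u − 𝟙_n C^u A^u = Λ G and βᵀ G = C^u A^u. -/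
/-!
It suffices to find `G` with `S G = G Aᵘ` and `βᵀ G = Cᵘ Aᵘ`, since then
`Λ G = S G − 𝟙 βᵀ G = G Aᵘ − 𝟙 Cᵘ Aᵘ`. Controllability makes the matrix `K` with rows
`βᵀ Sⁱ` (`i < n`) invertible, so `G` can be chosen with `βᵀ Sⁱ G = w Aⁱ` for `i < n`,
where `w = Cᵘ Aᵘ`. As `χ_S` annihilates both `S` and `Aᵘ`, reducing modulo `χ_S` extends this
to `βᵀ q(S) G = w q(Aᵘ)` for every polynomial `q`; taking `q = Xⁱ⁺¹` shows `K S G = K G Aᵘ`.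
-/

open Matrix Polynomial

section Intertwiner

variable {n : ℕ} {m : Type*} [Fintype m] [DecidableEq m]
  {S : Matrix (Fin n) (Fin n) ℝ} {β : Fin n → ℝ}

def observabilityMatrix (S : Matrix (Fin n) (Fin n) ℝ) (β : Fin n → ℝ) :
    Matrix (Fin n) (Fin n) ℝ :=
  Matrix.of fun i => β ᵥ* S ^ (i : ℕ)

theorem isUnit_observabilityMatrix (hctrb : Controllable Sᵀ β) :
    IsUnit (observabilityMatrix S β) := by
  rw [← vecMul_surjective_iff_isUnit]
  refine (LinearMap.range_eq_top (f := (observabilityMatrix S β).vecMulLinear)).mp ?_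
  have hrow : (observabilityMatrix S β).row = fun i : Fin n => (Sᵀ ^ (i : ℕ)) *ᵥ β := by
    funext i
    rw [← transpose_pow, mulVec_transpose]
    rfl
  rw [range_vecMulLinear, hrow]
  exact hctrb

theorem vecMul_aeval_mul_eq_of_forall_lt {G : Matrix (Fin n) m ℝ} {A : Matrix m m ℝ}
    {w : m → ℝ} (hA : aeval A S.charpoly = 0)
    (hpow : ∀ i < n, β ᵥ* (S ^ i * G) = w ᵥ* A ^ i) (q : ℝ[X]) :
    β ᵥ* (aeval S q * G) = w ᵥ* aeval A q := by
  classical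
  rw [← aeval_modByMonic_eq_self_of_root (aeval_self_charpoly S),
    ← aeval_modByMonic_eq_self_of_root (p := q) hA]
  suffices ∀ p ∈ degreeLT ℝ n, β ᵥ* (aeval S p * G) = w ᵥ* aeval A p from
    this _ <| mem_degreeLT.mpr <| (degree_modByMonic_lt q S.charpoly_monic).trans_eq <| by
      rw [charpoly_degree_eq_dim, Fintype.card_fin]
  intro p hp
  rw [degreeLT_eq_span_X_pow] at hp
  induction hp using Submodule.span_induction with
  | mem p hp =>
    obtain ⟨i, hi, rfl⟩ := Finset.mem_image.mp hp
    simpa using hpow i (Finset.mem_range.mp hi)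
  | zero => simp
  | add p r _ _ hp hr => rw [map_add, map_add, Matrix.add_mul, vecMul_add, vecMul_add, hp, hr]
  | smul c p _ hp => simp only [map_smul, smul_mul, vecMul_smul, hp]

theorem exists_mul_eq_mul_and_vecMul_eq (hctrb : Controllable Sᵀ β) {A : Matrix m m ℝ}
    (hA : aeval A S.charpoly = 0) (w : m → ℝ) :
    ∃ G : Matrix (Fin n) m ℝ, S * G = G * A ∧ β ᵥ* G = w := by
  set K := observabilityMatrix S β
  let := (isUnit_observabilityMatrix hctrb).invertible
  obtain ⟨G, hKG⟩ : ∃ G, K * G = Matrix.of fun i : Fin n => w ᵥ* A ^ (i : ℕ) :=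
    ⟨_, mul_inv_cancel_left_of_invertible K _⟩
  have hpoly := vecMul_aeval_mul_eq_of_forall_lt (G := G) hA fun i hi => by
    rw [← vecMul_vecMul]
    exact congrFun hKG ⟨i, hi⟩
  refine ⟨G, (Matrix.mul_right_inj_of_invertible K).mp ?_, by simpa using hpoly 1⟩
  funext i
  calc (K * (S * G)) i = β ᵥ* (aeval S (X ^ ((i : ℕ) + 1)) * G) := by
        rw [mul_apply_eq_vecMul, map_pow, aeval_X, pow_succ, Matrix.mul_assoc]
        exact vecMul_vecMul β _ _
    _ = w ᵥ* aeval A (X ^ ((i : ℕ) + 1)) := hpoly _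
    _ = (K * (G * A)) i := by
        rw [← Matrix.mul_assoc, mul_apply_eq_vecMul, hKG, map_pow, aeval_X, pow_succ]
        exact (vecMul_vecMul _ _ _).symm

end Intertwiner

/-- If `(Sᵀ, β)` is controllable, `Λ = S − 𝟙βᵀ`, and the characteristic polynomial of
`Aᵘ` divides that of `S`, then for any row vector `Cᵘ` there exists `G` with
`GAᵘ − 𝟙CᵘAᵘ = ΛG` and `βᵀG = CᵘAᵘ`. -/
theorem exists_G_intertwiner {n nu : ℕ}
    (S : Matrix (Fin n) (Fin n) ℝ) (β : Fin n → ℝ)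
    (hctrb : Controllable Sᵀ β)
    (Λ : Matrix (Fin n) (Fin n) ℝ)
    (hΛ : Λ = S - vecMulVec (fun _ => (1 : ℝ)) β)
    (Au : Matrix (Fin nu) (Fin nu) ℝ)
    (hdvd : Au.charpoly ∣ S.charpoly)
    (Cu : Fin nu → ℝ) :
    ∃ G : Matrix (Fin n) (Fin nu) ℝ,
      G * Au - vecMulVec (fun _ => (1 : ℝ)) Cu * Au = Λ * G ∧
      β ᵥ* G = Cu ᵥ* Au := by
  obtain ⟨G, hSG, hβG⟩ := exists_mul_eq_mul_and_vecMul_eq hctrb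
    (aeval_eq_zero_of_dvd_aeval_eq_zero hdvd (aeval_self_charpoly Au)) (Cu ᵥ* Au)
  refine ⟨G, ?_, hβG⟩
  rw [hΛ, Matrix.sub_mul, hSG, vecMulVec_mul, vecMulVec_mul, hβG]
end

section
/- Let S ∈ ℝ^{n×n} and β ∈ ℝⁿ with (Sᵀ, β) controllable. Then every matrix W ∈ ℝ^{n×n} can be decomposed as W = H_1 φ_1(S) + H_2 φ_2(S) + … + H_n φ_n(S), where H_i = e_i βᵀ with e_i the i-th standard basis vector of ℝⁿ, and each φ_j is a real polynomial of degree at most n − 1 evaluated at S. -/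
open Matrix

/-- If `(Sᵀ, β)` is controllable, then every matrix `W ∈ ℝ^{n×n}` can be decomposed as
`W = Σⱼ Hⱼ φⱼ(S)` where `Hⱼ = eⱼβᵀ` and each `φⱼ` is a real polynomial of degree at
most `n − 1`. -/
theorem matrix_decomposition {n : ℕ}
    (S : Matrix (Fin n) (Fin n) ℝ) (β : Fin n → ℝ)
    (hctrb : Controllable Sᵀ β) (W : Matrix (Fin n) (Fin n) ℝ) :
    ∃ φ : Fin n → Polynomial ℝ, (∀ j, (φ j).natDegree ≤ n - 1) ∧
      W = ∑ j, vecMulVec (Pi.single j 1) β * (Polynomial.aeval S (φ j)) := by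
  have h : ∀ j, ∃ c : Fin n → ℝ, ∑ i, c i • ((Sᵀ ^ (i:ℕ)) *ᵥ β) = W j := by
    intro j
    have hm : W j ∈ Submodule.span ℝ (Set.range fun i : Fin n => (Sᵀ ^ (i:ℕ)) *ᵥ β) := by
      rw [hctrb]; exact Submodule.mem_top
    rwa [Submodule.mem_span_range_iff_exists_fun] at hm
  choose c hc using h
  refine ⟨fun j => ∑ i : Fin n, Polynomial.C (c j i) * Polynomial.X ^ (i:ℕ), ?_, ?_⟩
  · intro j
    refine Polynomial.natDegree_sum_le_of_forall_le _ _ fun i _ => ?_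
    calc (Polynomial.C (c j i) * Polynomial.X ^ (i:ℕ)).natDegree
        ≤ (i:ℕ) := by
          refine (Polynomial.natDegree_C_mul_le (c j i) (Polynomial.X ^ (i:ℕ))).trans ?_
          simp
      _ ≤ n - 1 := by have := i.isLt; omega
  · ext a b
    have key := congrFun (hc a) b
    simp only [Finset.sum_apply, Pi.smul_apply, mulVec, dotProduct, transpose_pow,
      transpose_apply, smul_eq_mul] at key
    rw [Matrix.sum_apply]
    have hterm : ∀ j, (vecMulVec (Pi.single j 1) β * Polynomial.aeval S
        (∑ i : Fin n, Polynomial.C (c j i) * Polynomial.X ^ (i:ℕ))) a b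
        = (Pi.single j 1 : Fin n → ℝ) a * ∑ k, β k * ∑ i, c j i * (S ^ (i:ℕ)) k b := by
      intro j
      rw [Matrix.mul_apply]
      simp only [vecMulVec_apply, map_sum, _root_.map_mul, Polynomial.aeval_C, Polynomial.aeval_X_pow, _root_.map_mul,
        Matrix.sum_apply, Finset.mul_sum, algebraMap_smul, Matrix.smul_apply, smul_eq_mul]
      refine Finset.sum_congr rfl fun k _ => Finset.sum_congr rfl fun i _ => ?_
      rw [← Algebra.smul_def, Matrix.smul_apply, smul_eq_mul]; ring
    simp only [hterm]
    rw [Finset.sum_eq_single a]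
    · rw [Pi.single_eq_same, one_mul, ← key]
      simp only [transpose_pow, transpose_apply, Finset.mul_sum]
      rw [Finset.sum_comm]
      refine Finset.sum_congr rfl fun k _ => Finset.sum_congr rfl fun i _ => ?_
      rw [← transpose_pow, transpose_apply]; ring
    · intro j _ hj; rw [Pi.single_eq_of_ne' hj, zero_mul]
    · intro h; exact absurd (Finset.mem_univ a) h
end
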